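/- The Q_0-Margolis homology of B₂ is the polynomial algebra F_p[ζ_1, ζ_2]: the polynomial subalgebra F_p[ζ_1, ζ_2] ⊆ B₂ is contained in ker(Q_0), meets im(Q_0) only in 0, and the composite F_p[ζ_1, ζ_2] → ker(Q_0) → ker(Q_0)/im(Q_0) is an isomorphism of graded F_p-vector spaces. -/

import Mathlib

/-- A monomial of `B n = F_p[ζ₁, ζ₂, …] ⊗ Λ(τ̄_{n+1}, τ̄_{n+2}, …)`:
`e k` is the exponent of `ζ_k` (with `e 0 = 0`, i.e. no `ζ₀`), and
`t` is the set of indices `m` of the exterior generators `τ̄_m` occurring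
(all of which satisfy `m ≥ n + 1`). -/
structure Mono (n : ℕ) where
  e : ℕ →₀ ℕ
  t : Finset ℕ
  he : e 0 = 0
  ht : ∀ m ∈ t, n + 1 ≤ m

/-- `B p n` models `A//E(n)_* = F_p[ζ₁, ζ₂, …] ⊗ Λ(τ̄_{n+1}, …)` as the free
`F_p`-vector space on its monomial basis. -/
abbrev B (p n : ℕ) : Type := Mono n →₀ ZMod p

namespace Mono

variable {n : ℕ}

/-- Internal (topological) degree of a monomial: `deg ζ_k = 2(p^k − 1)`,
`deg τ̄_m = 2p^m − 1`. -/
def deg (p : ℕ) (x : Mono n) : ℕ :=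
  x.e.sum (fun k a => a * (2 * (p ^ k - 1))) + ∑ m ∈ x.t, (2 * p ^ m - 1)

/-- Weight of a monomial: `wt ζ_k = wt τ̄_k = p^k`, extended additively. -/
def wt (p : ℕ) (x : Mono n) : ℕ :=
  x.e.sum (fun k a => a * p ^ k) + ∑ m ∈ x.t, p ^ m

/-- Length of a monomial: the number of exterior factors `τ̄_m` occurring in it. -/
def len (x : Mono n) : ℕ := x.t.card

end Mono

/-- The monomial obtained from `x` by the Milnor operation `Q_r` acting on the
exterior factor `τ̄_m`: remove `τ̄_m` and multiply by `ζ_{m−r}^{p^r}`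
(with the convention `ζ₀ = 1`, i.e. if `m ≤ r` nothing is added). -/
noncomputable def Qtarget (p r : ℕ) {n : ℕ} (x : Mono n) (m : ℕ) : Mono n where
  e := if r < m then x.e + Finsupp.single (m - r) (p ^ r) else x.e
  t := x.t.erase m
  he := by
    by_cases h : r < m
    · simp [if_pos h, Finsupp.single_apply, x.he, Nat.sub_ne_zero_of_lt h]
    · simp [if_neg h, x.he]
  ht := fun m' hm' => x.ht m' (Finset.mem_of_mem_erase hm')

/-- Value of the Milnor operation `Q_r` on a basis monomial: the signed sum over the
exterior factors `τ̄_m` of `x`, the sign being the Koszul sign `(−1)^{#{m' ∈ t, m' < m}}`. -/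
noncomputable def Qmono (p r : ℕ) {n : ℕ} (x : Mono n) : B p n :=
  ∑ m ∈ x.t, ((-1 : ZMod p) ^ ((x.t.filter (fun m' => m' < m)).card)) •
    Finsupp.single (Qtarget p r x m) (1 : ZMod p)

/-- The Milnor operation `Q_r : B_n → B_n`, the unique graded derivation with
`Q_r ζ_k = 0` and `Q_r τ̄_m = ζ_{m−r}^{p^r}`. -/
noncomputable def Qop (p n r : ℕ) : B p n →ₗ[ZMod p] B p n :=
  Finsupp.lsum (ZMod p) fun x => LinearMap.toSpanSingleton (ZMod p) (B p n) (Qmono p r x)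

/-- The span of the set of monomials satisfying a predicate `P`. -/
noncomputable def monSpan (p n : ℕ) (P : Mono n → Prop) : Submodule (ZMod p) (B p n) :=
  Submodule.span (ZMod p) ((fun x => Finsupp.single x (1 : ZMod p)) '' {x | P x})

/-!
For `Q₀` the generators above `n` pair off into Koszul complexes `F_p[ζ_m] ⊗ Λ(τ̄_m)` with
`Q₀ τ̄_m = ζ_m`, `m > n`, each with homology `F_p`, so only `F_p[ζ₁, …, ζ_n]` survives.
Explicitly, let `m` be the least index `> n` at which a monomial `x` involves `ζ_m` or `τ̄_m`;
the homotopy `h` trades one `ζ_m` for `τ̄_m`, or kills `x` if `τ̄_m` already occurs. Then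
`Q₀ h + h Q₀ = id - π` for the projection `π` onto `F_p[ζ₁, …, ζ_n]`, while every monomial in
the image of `Q₀` contains some `ζ_m` with `m > n`.
-/

theorem Finset.card_filter_lt_eq_zero {α : Type*} [LinearOrder α] {s : Finset α} {m : α}
    (hm : ∀ a ∈ s, m ≤ a) : (s.filter (· < m)).card = 0 :=
  Finset.card_eq_zero.2 (Finset.filter_eq_empty_iff.2 fun a ha => not_lt.2 (hm a ha))

namespace Mono

variable {n : ℕ}

theorem ext {x y : Mono n} (he : x.e = y.e) (ht : x.t = y.t) : x = y := by
  cases x; cases y; simp_all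

def IsLow (x : Mono n) : Prop := x.t = ∅ ∧ ∀ k, n < k → x.e k = 0

theorem isLow_two_iff {x : Mono 2} :
    x.IsLow ↔ x.t = ∅ ∧ ∀ k, k ≠ 1 → k ≠ 2 → x.e k = 0 := by
  refine and_congr_right fun _ => ⟨fun h k h1 h2 => ?_, fun h k hk => h k (by omega) (by omega)⟩
  rcases Nat.lt_or_ge 2 k with hk | hk
  · exact h k hk
  · obtain rfl : k = 0 := by omega
    exact x.he

def highSupport (x : Mono n) : Finset ℕ := x.t ∪ x.e.support.filter (n < ·)

theorem lt_of_mem_highSupport {x : Mono n} {m : ℕ} (hm : m ∈ x.highSupport) : n < m := by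
  rcases Finset.mem_union.1 hm with h | h
  · exact x.ht m h
  · exact (Finset.mem_filter.1 h).2

theorem highSupport_eq_empty_iff {x : Mono n} : x.highSupport = ∅ ↔ x.IsLow := by
  simp [highSupport, IsLow, Finset.filter_eq_empty_iff, not_imp_comm]

theorem exp_ne_zero_of_mem_highSupport {x : Mono n} {m : ℕ} (hm : m ∈ x.highSupport)
    (hmt : m ∉ x.t) : x.e m ≠ 0 := by
  rcases Finset.mem_union.1 hm with h | h
  · exact absurd h hmt
  · exact Finsupp.mem_support_iff.1 (Finset.mem_filter.1 h).1

@[simps]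
noncomputable def insertTau (x : Mono n) (m : ℕ) (hm : n < m) : Mono n where
  e := x.e - Finsupp.single m 1
  t := insert m x.t
  he := by simp [x.he]
  ht := by
    intro a ha
    rcases Finset.mem_insert.1 ha with rfl | ha
    · exact hm
    · exact x.ht a ha

end Mono

open Mono

section Qtarget

variable {p n : ℕ} {x : Mono n} {m b : ℕ}

theorem Qtarget_zero_e (hm : 0 < m) : (Qtarget p 0 x m).e = x.e + Finsupp.single m 1 := by
  simp [Qtarget, hm]

theorem Qtarget_t (r : ℕ) : (Qtarget p r x m).t = x.t.erase m := rfl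

theorem highSupport_Qtarget_zero (hb : b ∈ x.t) :
    (Qtarget p 0 x b).highSupport = x.highSupport := by
  have hnb : n < b := x.ht b hb
  ext a
  by_cases hab : a = b
  · subst hab
    simp [highSupport, Qtarget_zero_e (show 0 < a by omega), hb, hnb]
  · simp [highSupport, Qtarget_zero_e (show 0 < b by omega), Qtarget_t, hab]

theorem Qtarget_insertTau (hm : n < m) (hme : x.e m ≠ 0) (hmt : m ∉ x.t) :
    Qtarget p 0 (x.insertTau m hm) m = x := by
  refine Mono.ext ?_ ?_
  · rw [Qtarget_zero_e (by omega), insertTau_e]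
    exact tsub_add_cancel_of_le (Finsupp.single_le_iff.2 (Nat.one_le_iff_ne_zero.2 hme))
  · simp [Qtarget_t, hmt]

theorem insertTau_Qtarget (hm : n < m) (hmt : m ∈ x.t) :
    (Qtarget p 0 x m).insertTau m hm = x := by
  refine Mono.ext ?_ ?_
  · rw [insertTau_e, Qtarget_zero_e (by omega), add_tsub_cancel_right]
  · simp [Qtarget_t, hmt]

theorem Qtarget_insertTau_comm (hm : n < m) (hb : 0 < b) (hbm : b ≠ m) :
    Qtarget p 0 (x.insertTau m hm) b = (Qtarget p 0 x b).insertTau m hm := by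
  refine Mono.ext ?_ ?_
  · rw [Qtarget_zero_e hb, insertTau_e, insertTau_e, Qtarget_zero_e hb]
    ext a
    simp only [Finsupp.add_apply, Finsupp.tsub_apply, Finsupp.single_apply]
    split_ifs <;> omega
  · simp [Qtarget_t, Finset.erase_insert_of_ne (Ne.symm hbm)]

end Qtarget

section Homotopy

noncomputable def homotopyMono (p : ℕ) {n : ℕ} (x : Mono n) : B p n :=
  if h : x.highSupport.Nonempty then
    if x.highSupport.min' h ∈ x.t then 0
    else Finsupp.single (x.insertTau _ (lt_of_mem_highSupport (x.highSupport.min'_mem h))) 1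
  else 0

noncomputable def homotopy (p n : ℕ) : B p n →ₗ[ZMod p] B p n :=
  Finsupp.linearCombination (ZMod p) (homotopyMono p)

open scoped Classical in
noncomputable def lowProj (p n : ℕ) : B p n →ₗ[ZMod p] B p n :=
  (Finsupp.supported (ZMod p) (ZMod p) {x : Mono n | x.IsLow}).subtype ∘ₗ
    Finsupp.restrictDom (ZMod p) (ZMod p) {x : Mono n | x.IsLow}

variable {p n : ℕ} {x : Mono n} {m : ℕ}

theorem Qop_single {r : ℕ} (x : Mono n) (c : ZMod p) :
    Qop p n r (Finsupp.single x c) = c • Qmono p r x := by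
  simp [Qop]

theorem homotopy_single (x : Mono n) (c : ZMod p) :
    homotopy p n (Finsupp.single x c) = c • homotopyMono p x :=
  Finsupp.linearCombination_single _ _ _

theorem lowProj_single_of_isLow (h : x.IsLow) (c : ZMod p) :
    lowProj p n (Finsupp.single x c) = Finsupp.single x c := by
  simp [lowProj, h]

theorem lowProj_single_of_not_isLow (h : ¬ x.IsLow) (c : ZMod p) :
    lowProj p n (Finsupp.single x c) = 0 := by
  simp [lowProj, h]

theorem lowProj_mem_supported (v : B p n) :
    lowProj p n v ∈ Finsupp.supported (ZMod p) (ZMod p) {x : Mono n | x.IsLow} := by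
  classical exact Submodule.coe_mem (Finsupp.restrictDom _ _ _ v)

theorem homotopyMono_of_isLow (h : x.IsLow) : homotopyMono p x = 0 := by
  rw [homotopyMono, dif_neg (by simp [highSupport_eq_empty_iff.2 h])]

theorem homotopyMono_of_isLeast_mem (hm : IsLeast (x.highSupport : Set ℕ) m) (hmt : m ∈ x.t) :
    homotopyMono p x = 0 := by
  have hne : x.highSupport.Nonempty := ⟨m, hm.1⟩
  simp only [homotopyMono, dif_pos hne, (Finset.isLeast_min' _ hne).unique hm, if_pos hmt]

theorem homotopyMono_of_isLeast_not_mem (hm : IsLeast (x.highSupport : Set ℕ) m)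
    (hmt : m ∉ x.t) :
    homotopyMono p x = Finsupp.single (x.insertTau m (lt_of_mem_highSupport hm.1)) 1 := by
  have hne : x.highSupport.Nonempty := ⟨m, hm.1⟩
  simp only [homotopyMono, dif_pos hne, (Finset.isLeast_min' _ hne).unique hm, if_neg hmt]

theorem homotopy_Qmono (x : Mono n) :
    homotopy p n (Qmono p 0 x) = ∑ b ∈ x.t,
      (-1 : ZMod p) ^ (x.t.filter (· < b)).card • homotopyMono p (Qtarget p 0 x b) := by
  simp only [Qmono, map_sum, map_smul, homotopy_single, one_smul]

theorem Qop_homotopyMono_add_homotopy_Qmono_of_isLeast_mem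
    (hm : IsLeast (x.highSupport : Set ℕ) m) (hmt : m ∈ x.t) :
    Qop p n 0 (homotopyMono p x) + homotopy p n (Qmono p 0 x) = Finsupp.single x 1 := by
  have hQm : ∀ b ∈ x.t, IsLeast ((Qtarget p 0 x b).highSupport : Set ℕ) m := fun b hb => by
    rwa [highSupport_Qtarget_zero hb]
  rw [homotopyMono_of_isLeast_mem hm hmt, map_zero, zero_add, homotopy_Qmono,
    Finset.sum_eq_single_of_mem m hmt]
  · rw [Finset.card_filter_lt_eq_zero fun a ha => hm.2 (Finset.mem_union_left _ ha), pow_zero,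
      one_smul, homotopyMono_of_isLeast_not_mem (hQm m hmt) (Finset.notMem_erase m x.t),
      insertTau_Qtarget _ hmt]
  · intro b hb hbm
    rw [homotopyMono_of_isLeast_mem (hQm b hb) (Finset.mem_erase.2 ⟨Ne.symm hbm, hmt⟩),
      smul_zero]

theorem Qop_homotopyMono_add_homotopy_Qmono_of_isLeast_not_mem
    (hm : IsLeast (x.highSupport : Set ℕ) m) (hmt : m ∉ x.t) :
    Qop p n 0 (homotopyMono p x) + homotopy p n (Qmono p 0 x) = Finsupp.single x 1 := by
  have hnm : n < m := lt_of_mem_highSupport hm.1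
  have hlt : ∀ b ∈ x.t, m < b := fun b hb =>
    lt_of_le_of_ne (hm.2 (Finset.mem_union_left _ hb)) fun h => hmt (h ▸ hb)
  -- `τ̄_m` is the first exterior factor of `x.insertTau m`, so `Q₀` of it is `x` plus terms
  -- carrying one extra sign, which cancel `h (Q₀ x)` term by term.
  rw [homotopyMono_of_isLeast_not_mem hm hmt, Qop_single, one_smul, Qmono, insertTau_t,
    Finset.sum_insert hmt, Finset.card_filter_lt_eq_zero, pow_zero, one_smul,
    Qtarget_insertTau hnm (exp_ne_zero_of_mem_highSupport hm.1 hmt) hmt, homotopy_Qmono,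
    add_assoc, ← Finset.sum_add_distrib, Finset.sum_eq_zero, add_zero]
  · intro b hb
    have hmb := hlt b hb
    have hQm : IsLeast ((Qtarget p 0 x b).highSupport : Set ℕ) m := by
      rwa [highSupport_Qtarget_zero hb]
    rw [homotopyMono_of_isLeast_not_mem hQm fun h => hmt (Finset.mem_of_mem_erase h),
      ← Qtarget_insertTau_comm hnm (by omega) hmb.ne', Finset.filter_insert, if_pos hmb,
      Finset.card_insert_of_notMem fun h => hmt (Finset.mem_filter.1 h).1,
      pow_succ, mul_neg_one, neg_smul, neg_add_cancel]
  · intro a ha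
    rcases Finset.mem_insert.1 ha with rfl | ha
    · exact le_rfl
    · exact (hlt a ha).le

theorem homotopy_relation_single (x : Mono n) :
    Qop p n 0 (homotopy p n (Finsupp.single x 1)) +
        homotopy p n (Qop p n 0 (Finsupp.single x 1)) + lowProj p n (Finsupp.single x 1) =
      Finsupp.single x 1 := by
  rw [homotopy_single, Qop_single, one_smul, one_smul]
  by_cases hx : x.IsLow
  · rw [homotopyMono_of_isLow hx, Qmono, hx.1, Finset.sum_empty, map_zero, map_zero, zero_add,
      zero_add, lowProj_single_of_isLow hx]
  · have hne : x.highSupport.Nonempty :=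
      Finset.nonempty_iff_ne_empty.2 (mt highSupport_eq_empty_iff.1 hx)
    have hm := Finset.isLeast_min' _ hne
    rw [lowProj_single_of_not_isLow hx, add_zero]
    by_cases hmt : x.highSupport.min' hne ∈ x.t
    · exact Qop_homotopyMono_add_homotopy_Qmono_of_isLeast_mem hm hmt
    · exact Qop_homotopyMono_add_homotopy_Qmono_of_isLeast_not_mem hm hmt

theorem homotopy_relation :
    Qop p n 0 ∘ₗ homotopy p n + homotopy p n ∘ₗ Qop p n 0 + lowProj p n = LinearMap.id :=
  Finsupp.lhom_ext' fun x => LinearMap.ext_ring (homotopy_relation_single x)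

end Homotopy

section Margolis

variable {p n : ℕ}

theorem monSpan_isLow_eq_supported :
    monSpan p n IsLow = Finsupp.supported (ZMod p) (ZMod p) {x : Mono n | x.IsLow} :=
  (Finsupp.supported_eq_span_single _ _).symm

theorem range_Qop_zero_le_supported_not_isLow :
    LinearMap.range (Qop p n 0) ≤
      Finsupp.supported (ZMod p) (ZMod p) {x : Mono n | ¬ x.IsLow} := by
  rintro _ ⟨v, rfl⟩
  induction v using Finsupp.induction_linear with
  | zero => simp
  | add v w hv hw => rw [map_add]; exact add_mem hv hw
  | single x c =>
    rw [Qop_single]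
    refine Submodule.smul_mem _ _ (Submodule.sum_mem _ fun b hb => Submodule.smul_mem _ _ ?_)
    refine Finsupp.single_mem_supported _ _ fun hlow => ?_
    have hnb : n < b := x.ht b hb
    have hzero := hlow.2 b hnb
    rw [Qtarget_zero_e (by omega), Finsupp.add_apply, Finsupp.single_eq_same] at hzero
    omega

theorem monSpan_isLow_le_ker_Qop_zero : monSpan p n IsLow ≤ LinearMap.ker (Qop p n 0) := by
  rw [monSpan, Submodule.span_le]
  rintro _ ⟨x, hx, rfl⟩
  simp [Qop_single, Qmono, hx.1]

theorem disjoint_monSpan_isLow_range_Qop_zero :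
    Disjoint (monSpan p n IsLow) (LinearMap.range (Qop p n 0)) := by
  rw [monSpan_isLow_eq_supported]
  exact (Finsupp.disjoint_supported_supported disjoint_compl_right).mono_right
    range_Qop_zero_le_supported_not_isLow

theorem ker_Qop_zero_le_monSpan_isLow_sup_range :
    LinearMap.ker (Qop p n 0) ≤ monSpan p n IsLow ⊔ LinearMap.range (Qop p n 0) := by
  intro v hv
  have hv' : Qop p n 0 (homotopy p n v) + lowProj p n v = v := by
    simpa [LinearMap.mem_ker.1 hv] using LinearMap.congr_fun homotopy_relation v
  rw [← hv', add_comm, monSpan_isLow_eq_supported]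
  exact Submodule.add_mem_sup (lowProj_mem_supported v) (LinearMap.mem_range_self _ _)

end Margolis

theorem margolis_Q0_of_B2 (p : ℕ) :
    monSpan p 2 (fun x => x.t = ∅ ∧ ∀ k, k ≠ 1 → k ≠ 2 → x.e k = 0) ≤
        LinearMap.ker (Qop p 2 0) ∧
    monSpan p 2 (fun x => x.t = ∅ ∧ ∀ k, k ≠ 1 → k ≠ 2 → x.e k = 0) ⊓
        LinearMap.range (Qop p 2 0) = ⊥ ∧
    LinearMap.ker (Qop p 2 0) ≤
      monSpan p 2 (fun x => x.t = ∅ ∧ ∀ k, k ≠ 1 → k ≠ 2 → x.e k = 0) ⊔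
        LinearMap.range (Qop p 2 0) := by
  have hlow : (fun x : Mono 2 => x.t = ∅ ∧ ∀ k, k ≠ 1 → k ≠ 2 → x.e k = 0) = IsLow :=
    funext fun _ => propext isLow_two_iff.symm
  rw [hlow]
  exact ⟨monSpan_isLow_le_ker_Qop_zero, disjoint_iff.1 disjoint_monSpan_isLow_range_Qop_zero,
    ker_Qop_zero_le_monSpan_isLow_sup_range⟩
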